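/- arXiv:2109.10018 — 2 statements merged into one kernel-verified Lean document; each statement's English description precedes it below -/
import Mathlib

section
/- (Consistency of the Protagoras-paradox assumptions) For every constant specification CS, the set {contract, court, time=10} is consistent in JTO_CS, i.e., {contract, court, time=10} ⊬_CS ⊥, where: contract := ⊡(winfirst_e ↔ O[a]_e pay) and court := true_10((¬win_p ↔ winfirst_e) ∧ (win_p → O[vp]_e pay) ∧ (¬win_p → ¬O[ve]_e pay)), for pairwise distinct atomic propositions win_p, winfirst_e, pay, an agent e, and pairwise distinct justification variables a, vp, ve. -/
namespace JTO

/-- Epistemic justification terms. -/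
inductive TmE (Const Var : Type) : Type
  | const : Const → TmE Const Var
  | var   : Var → TmE Const Var
  | bang  : TmE Const Var → TmE Const Var
  | plus  : TmE Const Var → TmE Const Var → TmE Const Var
  | times : TmE Const Var → TmE Const Var → TmE Const Var

/-- Deontic (normative) justification terms. -/
inductive TmO (Const Var : Type) : Type
  | const : Const → TmO Const Var
  | var   : Var → TmO Const Var
  | ddag  : TmO Const Var → TmO Const Var
  | times : TmO Const Var → TmO Const Var → TmO Const Var

/-- Formulas of the logic JTO. -/
inductive Fm (Ag Const Var Atom : Type) : Type
  | atom  : Atom → Fm Ag Const Var Atom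
  | bot   : Fm Ag Const Var Atom
  | imp   : Fm Ag Const Var Atom → Fm Ag Const Var Atom → Fm Ag Const Var Atom
  | next  : Fm Ag Const Var Atom → Fm Ag Const Var Atom
  | wprev : Fm Ag Const Var Atom → Fm Ag Const Var Atom
  | untl  : Fm Ag Const Var Atom → Fm Ag Const Var Atom → Fm Ag Const Var Atom
  | snce  : Fm Ag Const Var Atom → Fm Ag Const Var Atom → Fm Ag Const Var Atom
  | jbox  : Ag → TmE Const Var → Fm Ag Const Var Atom → Fm Ag Const Var Atom
  | obox  : Ag → TmO Const Var → Fm Ag Const Var Atom → Fm Ag Const Var Atom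

namespace Fm

variable {Ag Const Var Atom : Type}

/-- ¬φ := φ → ⊥ -/
def neg (φ : Fm Ag Const Var Atom) : Fm Ag Const Var Atom := φ.imp bot
/-- ⊤ := ¬⊥ -/
def top : Fm Ag Const Var Atom := neg bot
/-- φ ∨ ψ := ¬φ → ψ -/
def disj (φ ψ : Fm Ag Const Var Atom) : Fm Ag Const Var Atom := (neg φ).imp ψ
/-- φ ∧ ψ := ¬(¬φ ∨ ¬ψ) -/
def conj (φ ψ : Fm Ag Const Var Atom) : Fm Ag Const Var Atom := neg (disj (neg φ) (neg ψ))
/-- φ ↔ ψ := (φ→ψ) ∧ (ψ→φ) -/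
def biim (φ ψ : Fm Ag Const Var Atom) : Fm Ag Const Var Atom := conj (φ.imp ψ) (ψ.imp φ)
/-- strong previous ⊙ₛφ := ¬⊙_w¬φ -/
def sprev (φ : Fm Ag Const Var Atom) : Fm Ag Const Var Atom := neg (wprev (neg φ))
/-- eventually ◇φ := ⊤ U φ -/
def ev (φ : Fm Ag Const Var Atom) : Fm Ag Const Var Atom := untl top φ
/-- always (henceforth) □φ := ¬◇¬φ -/
def alw (φ : Fm Ag Const Var Atom) : Fm Ag Const Var Atom := neg (ev (neg φ))
/-- once ◇⁻φ := ⊤ S φ -/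
def once (φ : Fm Ag Const Var Atom) : Fm Ag Const Var Atom := snce top φ
/-- has-always-been □⁻φ := ¬◇⁻¬φ -/
def sofar (φ : Fm Ag Const Var Atom) : Fm Ag Const Var Atom := neg (once (neg φ))
/-- ⊡φ := □⁻φ ∧ □φ -/
def boxdot (φ : Fm Ag Const Var Atom) : Fm Ag Const Var Atom := conj (sofar φ) (alw φ)
/-- weak until (unless) φ W ψ := (φ U ψ) ∨ □φ -/
def wuntl (φ ψ : Fm Ag Const Var Atom) : Fm Ag Const Var Atom := disj (untl φ ψ) (alw φ)
/-- permission P[s]ᵢφ := ¬O[s]ᵢ¬φ -/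
def pbox (i : Ag) (t : TmO Const Var) (φ : Fm Ag Const Var Atom) : Fm Ag Const Var Atom :=
  neg (obox i t (neg φ))
/-- time = m, i.e. ⊙ₛ^m ⊙_w ⊥ -/
def timeEq : ℕ → Fm Ag Const Var Atom
  | 0 => wprev bot
  | m + 1 => sprev (timeEq m)
/-- true_m(φ) := ⊡(time=m → φ) -/
def trueAt (m : ℕ) (φ : Fm Ag Const Var Atom) : Fm Ag Const Var Atom :=
  boxdot ((timeEq m).imp φ)

/-- Subformulas. -/
def subf : Fm Ag Const Var Atom → Set (Fm Ag Const Var Atom)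
  | atom p => {atom p}
  | bot => {bot}
  | imp φ ψ => insert (imp φ ψ) (subf φ ∪ subf ψ)
  | next φ => insert (next φ) (subf φ)
  | wprev φ => insert (wprev φ) (subf φ)
  | untl φ ψ => insert (untl φ ψ) (subf φ ∪ subf ψ)
  | snce φ ψ => insert (snce φ ψ) (subf φ ∪ subf ψ)
  | jbox i t φ => insert (jbox i t φ) (subf φ)
  | obox i t φ => insert (obox i t φ) (subf φ)

/-- Subf⁺(χ) := A_χ ∪ {¬ψ : ψ ∈ A_χ}, with A_χ = Subf(χ) ∪ Subf(⊤ S ⊙_w⊥). -/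
def subfPlus (χ : Fm Ag Const Var Atom) : Set (Fm Ag Const Var Atom) :=
  (subf χ ∪ subf (snce top (wprev bot))) ∪ neg '' (subf χ ∪ subf (snce top (wprev bot)))

end Fm

variable {Ag Const Var Atom : Type}

/-- Propositional tautologies in the language of JTO. -/
def Taut (φ : Fm Ag Const Var Atom) : Prop :=
  ∀ v : Fm Ag Const Var Atom → Bool,
    v Fm.bot = false → (∀ a b, v (a.imp b) = (!(v a) || v b)) → v φ = true

/-- The axioms of JTO. -/
inductive IsAxiom : Fm Ag Const Var Atom → Prop
  | taut {φ : Fm Ag Const Var Atom} : Taut φ → IsAxiom φ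
  | nextK (φ ψ : Fm Ag Const Var Atom) :
      IsAxiom ((Fm.next (φ.imp ψ)).imp ((Fm.next φ).imp (Fm.next ψ)))
  | alwK (φ ψ : Fm Ag Const Var Atom) :
      IsAxiom ((Fm.alw (φ.imp ψ)).imp ((Fm.alw φ).imp (Fm.alw ψ)))
  | fn (φ : Fm Ag Const Var Atom) :
      IsAxiom (Fm.biim (Fm.next (Fm.neg φ)) (Fm.neg (Fm.next φ)))
  | ind (φ : Fm Ag Const Var Atom) :
      IsAxiom ((Fm.alw (φ.imp (Fm.next φ))).imp (φ.imp (Fm.alw φ)))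
  | untl1 (φ ψ : Fm Ag Const Var Atom) :
      IsAxiom ((Fm.untl φ ψ).imp (Fm.ev ψ))
  | untl2 (φ ψ : Fm Ag Const Var Atom) :
      IsAxiom (Fm.biim (Fm.untl φ ψ) (Fm.disj ψ (Fm.conj φ (Fm.next (Fm.untl φ ψ)))))
  | sofarK (φ ψ : Fm Ag Const Var Atom) :
      IsAxiom ((Fm.sofar (φ.imp ψ)).imp ((Fm.sofar φ).imp (Fm.sofar ψ)))
  | wprevK (φ ψ : Fm Ag Const Var Atom) :
      IsAxiom ((Fm.wprev (φ.imp ψ)).imp ((Fm.wprev φ).imp (Fm.wprev ψ)))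
  | sw (φ : Fm Ag Const Var Atom) : IsAxiom ((Fm.sprev φ).imp (Fm.wprev φ))
  | initial : IsAxiom (Fm.once (Fm.wprev (Fm.bot : Fm Ag Const Var Atom)))
  | sofarInd (φ : Fm Ag Const Var Atom) :
      IsAxiom ((Fm.sofar (φ.imp (Fm.wprev φ))).imp (φ.imp (Fm.sofar φ)))
  | snce1 (φ ψ : Fm Ag Const Var Atom) : IsAxiom ((Fm.snce φ ψ).imp (Fm.once ψ))
  | snce2 (φ ψ : Fm Ag Const Var Atom) :
      IsAxiom (Fm.biim (Fm.snce φ ψ) (Fm.disj ψ (Fm.conj φ (Fm.sprev (Fm.snce φ ψ)))))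
  | fp (φ : Fm Ag Const Var Atom) : IsAxiom (φ.imp (Fm.next (Fm.sprev φ)))
  | pf (φ : Fm Ag Const Var Atom) : IsAxiom (φ.imp (Fm.wprev (Fm.next φ)))
  | app (i : Ag) (t s : TmE Const Var) (φ ψ : Fm Ag Const Var Atom) :
      IsAxiom ((Fm.jbox i t (φ.imp ψ)).imp ((Fm.jbox i s φ).imp (Fm.jbox i (TmE.times t s) ψ)))
  | sum1 (i : Ag) (t s : TmE Const Var) (φ : Fm Ag Const Var Atom) :
      IsAxiom ((Fm.jbox i t φ).imp (Fm.jbox i (TmE.plus t s) φ))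
  | sum2 (i : Ag) (t s : TmE Const Var) (φ : Fm Ag Const Var Atom) :
      IsAxiom ((Fm.jbox i s φ).imp (Fm.jbox i (TmE.plus t s) φ))
  | fact (i : Ag) (t : TmE Const Var) (φ : Fm Ag Const Var Atom) :
      IsAxiom ((Fm.jbox i t φ).imp φ)
  | pos (i : Ag) (t : TmE Const Var) (φ : Fm Ag Const Var Atom) :
      IsAxiom ((Fm.jbox i t φ).imp (Fm.jbox i (TmE.bang t) (Fm.jbox i t φ)))
  | appO (i : Ag) (t s : TmO Const Var) (φ ψ : Fm Ag Const Var Atom) :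
      IsAxiom ((Fm.obox i t (φ.imp ψ)).imp ((Fm.obox i s φ).imp (Fm.obox i (TmO.times t s) ψ)))
  | noc (i : Ag) (t : TmO Const Var) (φ : Fm Ag Const Var Atom) :
      IsAxiom ((Fm.obox i t φ).imp (Fm.pbox i t φ))
  | ofact (i : Ag) (t : TmO Const Var) (φ : Fm Ag Const Var Atom) :
      IsAxiom (Fm.obox i (TmO.ddag t) ((Fm.obox i t φ).imp φ))

/-- Formulas of the shape [c_{j_n}]_{i_n} … [c_{j_1}]_{i_1} φ with φ an axiom instance, n ≥ 1. -/
inductive EIter : Fm Ag Const Var Atom → Prop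
  | base {i : Ag} {c : Const} {φ : Fm Ag Const Var Atom} :
      IsAxiom φ → EIter (Fm.jbox i (TmE.const c) φ)
  | step {i : Ag} {c : Const} {φ : Fm Ag Const Var Atom} :
      EIter φ → EIter (Fm.jbox i (TmE.const c) φ)

/-- Formulas of the shape O[c_{j_n}]_{i_n} … O[c_{j_1}]_{i_1} φ with φ an axiom instance, n ≥ 1. -/
inductive OIter : Fm Ag Const Var Atom → Prop
  | base {i : Ag} {c : Const} {φ : Fm Ag Const Var Atom} :
      IsAxiom φ → OIter (Fm.obox i (TmO.const c) φ)
  | step {i : Ag} {c : Const} {φ : Fm Ag Const Var Atom} :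
      OIter φ → OIter (Fm.obox i (TmO.const c) φ)

/-- A constant specification: a downward closed set of iterated constant-justification
assertions of axiom instances. -/
structure ConstSpec (Ag Const Var Atom : Type) where
  set : Set (Fm Ag Const Var Atom)
  shape : ∀ φ ∈ set, EIter φ ∨ OIter φ
  dcE : ∀ (i : Ag) (c : Const) (φ : Fm Ag Const Var Atom),
    Fm.jbox i (TmE.const c) φ ∈ set → EIter φ → φ ∈ set
  dcO : ∀ (i : Ag) (c : Const) (φ : Fm Ag Const Var Atom),
    Fm.obox i (TmO.const c) φ ∈ set → OIter φ → φ ∈ set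

/-- CS^E : the epistemic part of a constant specification. -/
def ConstSpec.csE (CS : ConstSpec Ag Const Var Atom) : Set (Fm Ag Const Var Atom) :=
  {φ ∈ CS.set | EIter φ}

/-- CS^O : the deontic part of a constant specification. -/
def ConstSpec.csO (CS : ConstSpec Ag Const Var Atom) : Set (Fm Ag Const Var Atom) :=
  {φ ∈ CS.set | OIter φ}

/-- Derivability in the Hilbert system JTO_CS. -/
inductive Deriv (CS : ConstSpec Ag Const Var Atom) : Fm Ag Const Var Atom → Prop
  | ax {φ : Fm Ag Const Var Atom} : IsAxiom φ → Deriv CS φ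
  | mp {φ ψ : Fm Ag Const Var Atom} : Deriv CS (φ.imp ψ) → Deriv CS φ → Deriv CS ψ
  | necNext {φ : Fm Ag Const Var Atom} : Deriv CS φ → Deriv CS (Fm.next φ)
  | necWPrev {φ : Fm Ag Const Var Atom} : Deriv CS φ → Deriv CS (Fm.wprev φ)
  | necAlw {φ : Fm Ag Const Var Atom} : Deriv CS φ → Deriv CS (Fm.alw φ)
  | necSofar {φ : Fm Ag Const Var Atom} : Deriv CS φ → Deriv CS (Fm.sofar φ)
  | csax {φ : Fm Ag Const Var Atom} : φ ∈ CS.set → Deriv CS φ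

/-- Conjunction of a list of formulas. -/
def conjList : List (Fm Ag Const Var Atom) → Fm Ag Const Var Atom
  | [] => Fm.top
  | φ :: l => Fm.conj φ (conjList l)

/-- T ⊢_CS φ iff ⊢_CS (ψ₁ ∧ … ∧ ψ_n) → φ for some ψ₁, …, ψ_n ∈ T. -/
def DerivFrom (CS : ConstSpec Ag Const Var Atom) (T : Set (Fm Ag Const Var Atom))
    (φ : Fm Ag Const Var Atom) : Prop :=
  ∃ L : List (Fm Ag Const Var Atom), (∀ ψ ∈ L, ψ ∈ T) ∧ Deriv CS ((conjList L).imp φ)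

/-- A set of formulas is consistent if it does not derive ⊥. -/
def Consistent (CS : ConstSpec Ag Const Var Atom) (T : Set (Fm Ag Const Var Atom)) : Prop :=
  ¬ DerivFrom CS T Fm.bot

end JTO
namespace JTO

variable {Ag Const Var Atom : Type}

/-- The data of an F-interpreted system (Fitting-style), without conditions. -/
structure FQuasi (Ag Const Var Atom S : Type) where
  R : Set (ℕ → S)
  K : Ag → S → S → Prop
  KO : Ag → S → S → Prop
  E : Ag → S → TmE Const Var → Set (Fm Ag Const Var Atom)
  EO : Ag → S → TmO Const Var → Set (Fm Ag Const Var Atom)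
  val : S → Set Atom

/-- Truth at a point (r, n) of an F-interpreted system. -/
def FQuasi.Sat {S : Type} (I : FQuasi Ag Const Var Atom S) :
    Fm Ag Const Var Atom → (ℕ → S) → ℕ → Prop
  | .atom p, r, n => p ∈ I.val (r n)
  | .bot, _, _ => False
  | .imp φ ψ, r, n => I.Sat φ r n → I.Sat ψ r n
  | .next φ, r, n => I.Sat φ r (n + 1)
  | .wprev φ, r, n => n = 0 ∨ I.Sat φ r (n - 1)
  | .untl φ ψ, r, n => ∃ m, n ≤ m ∧ I.Sat ψ r m ∧ ∀ k, n ≤ k → k < m → I.Sat φ r k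
  | .snce φ ψ, r, n => ∃ m, m ≤ n ∧ I.Sat ψ r m ∧ ∀ k, m < k → k ≤ n → I.Sat φ r k
  | .jbox i t φ, r, n =>
      φ ∈ I.E i (r n) t ∧ ∀ r' ∈ I.R, ∀ n' : ℕ, I.K i (r n) (r' n') → I.Sat φ r' n'
  | .obox i t φ, r, n =>
      φ ∈ I.EO i (r n) t ∧ ∀ r' ∈ I.R, ∀ n' : ℕ, I.KO i (r n) (r' n') → I.Sat φ r' n'

/-- An F-interpreted system for JTO_CS. -/
structure FIS (Ag Const Var Atom S : Type) (CS : ConstSpec Ag Const Var Atom)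
    extends FQuasi Ag Const Var Atom S where
  Sne : Nonempty S
  Rne : R.Nonempty
  Krefl : ∀ (i : Ag) (w : S), K i w w
  Ktrans : ∀ (i : Ag) (u v w : S), K i u v → K i v w → K i u w
  KOshift : ∀ (i : Ag) (w v : S), KO i w v → KO i v v
  Emono : ∀ (i : Ag) (v w : S) (t : TmE Const Var), K i v w → E i v t ⊆ E i w t
  Ecs : ∀ (i : Ag) (w : S) (t : TmE Const Var) (φ : Fm Ag Const Var Atom),
    Fm.jbox i t φ ∈ CS.csE → φ ∈ E i w t
  Eapp : ∀ (i : Ag) (w : S) (t s : TmE Const Var) (φ ψ : Fm Ag Const Var Atom),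
    φ.imp ψ ∈ E i w t → φ ∈ E i w s → ψ ∈ E i w (TmE.times t s)
  Epos : ∀ (i : Ag) (w : S) (t : TmE Const Var) (φ : Fm Ag Const Var Atom),
    φ ∈ E i w t → Fm.jbox i t φ ∈ E i w (TmE.bang t)
  EOcs : ∀ (i : Ag) (w : S) (t : TmO Const Var) (φ : Fm Ag Const Var Atom),
    Fm.obox i t φ ∈ CS.csO → φ ∈ EO i w t
  EOapp : ∀ (i : Ag) (w : S) (t s : TmO Const Var) (φ ψ : Fm Ag Const Var Atom),
    φ.imp ψ ∈ EO i w t → φ ∈ EO i w s → ψ ∈ EO i w (TmO.times t s)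
  EOcons : ∀ (i : Ag) (w : S) (t : TmO Const Var) (φ : Fm Ag Const Var Atom),
    φ ∈ EO i w t → Fm.neg φ ∉ EO i w t
  EOfact : ∀ (i : Ag) (w : S) (t : TmO Const Var) (φ : Fm Ag Const Var Atom),
    (Fm.obox i t φ).imp φ ∈ EO i w (TmO.ddag t)

/-- Truth at a point of an F-interpreted system. -/
abbrev FIS.Sat {S : Type} {CS : ConstSpec Ag Const Var Atom}
    (I : FIS Ag Const Var Atom S CS) :
    Fm Ag Const Var Atom → (ℕ → S) → ℕ → Prop :=
  I.toFQuasi.Sat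

/-- I ⊨ φ : truth at every point of the system. -/
def FIS.Valid {S : Type} {CS : ConstSpec Ag Const Var Atom}
    (I : FIS Ag Const Var Atom S CS) (φ : Fm Ag Const Var Atom) : Prop :=
  ∀ r ∈ I.R, ∀ n : ℕ, I.Sat φ r n

/-- ⊨_CS φ : validity in all F-interpreted systems for JTO_CS. -/
def FValid (CS : ConstSpec Ag Const Var Atom) (φ : Fm Ag Const Var Atom) : Prop :=
  ∀ (S : Type) (I : FIS Ag Const Var Atom S CS), I.Valid φ

/-- T ⊨_CS φ : the local consequence relation over F-interpreted systems. -/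
def FConseq (CS : ConstSpec Ag Const Var Atom) (T : Set (Fm Ag Const Var Atom))
    (φ : Fm Ag Const Var Atom) : Prop :=
  ∀ (S : Type) (I : FIS Ag Const Var Atom S CS), ∀ r ∈ I.R, ∀ n : ℕ,
    (∀ ψ ∈ T, I.Sat ψ r n) → I.Sat φ r n

/-- Maximal consistent sets of formulas. -/
def MCS (CS : ConstSpec Ag Const Var Atom) : Set (Set (Fm Ag Const Var Atom)) :=
  {Γ | Consistent CS Γ ∧ ∀ Δ, Γ ⊂ Δ → ¬ Consistent CS Δ}

/-- χ-maximal consistent subsets of Subf⁺(χ). -/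
def MCSx (CS : ConstSpec Ag Const Var Atom) (χ : Fm Ag Const Var Atom) :
    Set (Set (Fm Ag Const Var Atom)) :=
  {X | X ⊆ Fm.subfPlus χ ∧ Consistent CS X ∧
    ∀ Y, Y ⊆ Fm.subfPlus χ → X ⊂ Y → ¬ Consistent CS Y}

/-- The relation R_○ on MCS_χ (given by witnessing maximal consistent sets). -/
def Rnext (CS : ConstSpec Ag Const Var Atom) (χ : Fm Ag Const Var Atom)
    (X Y : Set (Fm Ag Const Var Atom)) : Prop :=
  ∃ Γ ∈ MCS CS, ∃ Δ ∈ MCS CS, X = Γ ∩ Fm.subfPlus χ ∧ Y = Δ ∩ Fm.subfPlus χ ∧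
    {φ | Fm.next φ ∈ Γ} ⊆ Δ

/-- Acceptable sequences of elements of MCS_χ. -/
def Acceptable (CS : ConstSpec Ag Const Var Atom) (χ : Fm Ag Const Var Atom)
    (X : ℕ → Set (Fm Ag Const Var Atom)) : Prop :=
  (∀ n, X n ∈ MCSx CS χ) ∧
  (∀ n, Rnext CS χ (X n) (X (n + 1))) ∧
  (∀ n (φ ψ : Fm Ag Const Var Atom), Fm.untl φ ψ ∈ X n →
    ∃ m, n ≤ m ∧ ψ ∈ X m ∧ ∀ k, n ≤ k → k < m → φ ∈ X k) ∧
  Fm.wprev Fm.bot ∈ X 0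

/-- The canonical epistemic accessibility relation. -/
def canK (CS : ConstSpec Ag Const Var Atom) (χ : Fm Ag Const Var Atom) (i : Ag)
    (X Y : Set (Fm Ag Const Var Atom)) : Prop :=
  ∀ Δ ∈ MCS CS, Y = Δ ∩ Fm.subfPlus χ →
    ∃ Γ ∈ MCS CS, X = Γ ∩ Fm.subfPlus χ ∧
      {φ | ∃ t : TmE Const Var, Fm.jbox i t φ ∈ Γ} ⊆ Δ

/-- The canonical evidence function. -/
def canE (CS : ConstSpec Ag Const Var Atom) (χ : Fm Ag Const Var Atom) (i : Ag)
    (X : Set (Fm Ag Const Var Atom)) (t : TmE Const Var) : Set (Fm Ag Const Var Atom) :=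
  {φ | ∀ Γ ∈ MCS CS, X = Γ ∩ Fm.subfPlus χ → Fm.jbox i t φ ∈ Γ}

/-- The canonical deontic accessibility relation. -/
def canKO (CS : ConstSpec Ag Const Var Atom) (χ : Fm Ag Const Var Atom) (i : Ag)
    (X Y : Set (Fm Ag Const Var Atom)) : Prop :=
  ∃ Γ ∈ MCS CS, ∃ Δ ∈ MCS CS, X = Γ ∩ Fm.subfPlus χ ∧ Y = Δ ∩ Fm.subfPlus χ ∧
    {φ | ∃ t : TmO Const Var, Fm.obox i t φ ∈ Γ} ⊆ Δ

/-- The canonical normative evidence function. -/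
def canEO (CS : ConstSpec Ag Const Var Atom) (χ : Fm Ag Const Var Atom) (i : Ag)
    (X : Set (Fm Ag Const Var Atom)) (t : TmO Const Var) : Set (Fm Ag Const Var Atom) :=
  {φ | ∀ Γ ∈ MCS CS, X = Γ ∩ Fm.subfPlus χ → Fm.obox i t φ ∈ Γ}

/-- The χ-canonical F-interpreted system (as structured data). -/
def canFQuasi (CS : ConstSpec Ag Const Var Atom) (χ : Fm Ag Const Var Atom) :
    FQuasi Ag Const Var Atom ↥(MCSx CS χ) where
  R := {r | Acceptable CS χ (fun n => ((r n : Set (Fm Ag Const Var Atom))))}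
  K := fun i X Y => canK CS χ i X.1 Y.1
  KO := fun i X Y => canKO CS χ i X.1 Y.1
  E := fun i X t => canE CS χ i X.1 t
  EO := fun i X t => canEO CS χ i X.1 t
  val := fun X => {p | Fm.atom p ∈ X.1}

end JTO
namespace JTO

variable {Ag Const Var Atom : Type}

/-- The data of a quasi-interpreted-neighborhood system. -/
structure NQuasi (Ag Const Var Atom S : Type) where
  R : Set (ℕ → S)
  N : Ag → S → TmE Const Var → Set (Set S)
  NO : Ag → S → TmO Const Var → Set (Set S)
  val : S → Set Atom
  valF : S → Set (Fm Ag Const Var Atom)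

/-- The image Im(R) of the system of runs. -/
def NQuasi.Im {S : Type} (I : NQuasi Ag Const Var Atom S) : Set S :=
  {w | ∃ r ∈ I.R, ∃ n : ℕ, r n = w}

/-- Truth at a point (r, n) of a quasi-interpreted-neighborhood system. -/
def NQuasi.SatP {S : Type} (I : NQuasi Ag Const Var Atom S) :
    Fm Ag Const Var Atom → (ℕ → S) → ℕ → Prop
  | .atom p, r, n => p ∈ I.val (r n)
  | .bot, _, _ => False
  | .imp φ ψ, r, n => I.SatP φ r n → I.SatP ψ r n
  | .next φ, r, n => I.SatP φ r (n + 1)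
  | .wprev φ, r, n => n = 0 ∨ I.SatP φ r (n - 1)
  | .untl φ ψ, r, n => ∃ m, n ≤ m ∧ I.SatP ψ r m ∧ ∀ k, n ≤ k → k < m → I.SatP φ r k
  | .snce φ ψ, r, n => ∃ m, m ≤ n ∧ I.SatP ψ r m ∧ ∀ k, m < k → k ≤ n → I.SatP φ r k
  | .jbox i t φ, r, n =>
      {w | (∃ r' ∈ I.R, ∃ n' : ℕ, r' n' = w ∧ I.SatP φ r' n') ∨
            (w ∉ I.Im ∧ φ ∈ I.valF w)} ∈ I.N i (r n) t
  | .obox i t φ, r, n =>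
      {w | (∃ r' ∈ I.R, ∃ n' : ℕ, r' n' = w ∧ I.SatP φ r' n') ∨
            (w ∉ I.Im ∧ φ ∈ I.valF w)} ∈ I.NO i (r n) t

/-- Truth at a state of a quasi-interpreted-neighborhood system. -/
def NQuasi.SatS {S : Type} (I : NQuasi Ag Const Var Atom S)
    (φ : Fm Ag Const Var Atom) (w : S) : Prop :=
  (∃ r ∈ I.R, ∃ n : ℕ, r n = w ∧ I.SatP φ r n) ∨ (w ∉ I.Im ∧ φ ∈ I.valF w)

/-- The truth set ⟦φ⟧ of a formula. -/
def NQuasi.tset {S : Type} (I : NQuasi Ag Const Var Atom S)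
    (φ : Fm Ag Const Var Atom) : Set S :=
  {w | I.SatS φ w}

/-- An interpreted-neighborhood system for JTO_CS. -/
structure NIS (Ag Const Var Atom S : Type) (CS : ConstSpec Ag Const Var Atom)
    extends NQuasi Ag Const Var Atom S where
  Sne : Nonempty S
  Rne : R.Nonempty
  Ncs : ∀ (i : Ag) (t : TmE Const Var) (φ : Fm Ag Const Var Atom),
    Fm.jbox i t φ ∈ CS.csE → ∀ w ∈ toNQuasi.Im, toNQuasi.tset φ ∈ N i w t
  Napp : ∀ (i : Ag), ∀ w ∈ toNQuasi.Im, ∀ (t s : TmE Const Var) (φ ψ : Fm Ag Const Var Atom),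
    toNQuasi.tset (φ.imp ψ) ∈ N i w t → toNQuasi.tset φ ∈ N i w s →
      toNQuasi.tset ψ ∈ N i w (TmE.times t s)
  Nsum : ∀ (i : Ag), ∀ w ∈ toNQuasi.Im, ∀ (t s : TmE Const Var) (φ : Fm Ag Const Var Atom),
    toNQuasi.tset φ ∈ N i w s →
      toNQuasi.tset φ ∈ N i w (TmE.plus t s) ∧ toNQuasi.tset φ ∈ N i w (TmE.plus s t)
  Nrefl : ∀ (i : Ag), ∀ w ∈ toNQuasi.Im, ∀ (t : TmE Const Var) (φ : Fm Ag Const Var Atom),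
    toNQuasi.tset φ ∈ N i w t → w ∈ toNQuasi.tset φ
  Npos : ∀ (i : Ag), ∀ w ∈ toNQuasi.Im, ∀ (t : TmE Const Var) (φ : Fm Ag Const Var Atom),
    toNQuasi.tset φ ∈ N i w t → toNQuasi.tset (Fm.jbox i t φ) ∈ N i w (TmE.bang t)
  NOcs : ∀ (i : Ag) (t : TmO Const Var) (φ : Fm Ag Const Var Atom),
    Fm.obox i t φ ∈ CS.csO → ∀ w ∈ toNQuasi.Im, toNQuasi.tset φ ∈ NO i w t
  NOapp : ∀ (i : Ag), ∀ w ∈ toNQuasi.Im, ∀ (t s : TmO Const Var) (φ ψ : Fm Ag Const Var Atom),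
    toNQuasi.tset (φ.imp ψ) ∈ NO i w t → toNQuasi.tset φ ∈ NO i w s →
      toNQuasi.tset ψ ∈ NO i w (TmO.times t s)
  NOnoc : ∀ (i : Ag), ∀ w ∈ toNQuasi.Im, ∀ (t : TmO Const Var) (φ : Fm Ag Const Var Atom),
    toNQuasi.tset φ ∈ NO i w t → toNQuasi.tset (Fm.neg φ) ∉ NO i w t
  NOfact : ∀ (i : Ag), ∀ w ∈ toNQuasi.Im, ∀ (t : TmO Const Var) (φ : Fm Ag Const Var Atom),
    toNQuasi.tset ((Fm.obox i t φ).imp φ) ∈ NO i w (TmO.ddag t)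

/-- Truth at a point of an interpreted-neighborhood system. -/
abbrev NIS.SatP {S : Type} {CS : ConstSpec Ag Const Var Atom}
    (I : NIS Ag Const Var Atom S CS) :
    Fm Ag Const Var Atom → (ℕ → S) → ℕ → Prop :=
  I.toNQuasi.SatP

/-- I ⊨ φ for an interpreted-neighborhood system. -/
def NIS.Valid {S : Type} {CS : ConstSpec Ag Const Var Atom}
    (I : NIS Ag Const Var Atom S CS) (φ : Fm Ag Const Var Atom) : Prop :=
  ∀ r ∈ I.R, ∀ n : ℕ, I.SatP φ r n

/-- ⊨^N_CS φ : validity in all interpreted-neighborhood systems for JTO_CS. -/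
def NValid (CS : ConstSpec Ag Const Var Atom) (φ : Fm Ag Const Var Atom) : Prop :=
  ∀ (S : Type) (I : NIS Ag Const Var Atom S CS), I.Valid φ

/-- T ⊨^N_CS φ : local consequence over interpreted-neighborhood systems. -/
def NConseq (CS : ConstSpec Ag Const Var Atom) (T : Set (Fm Ag Const Var Atom))
    (φ : Fm Ag Const Var Atom) : Prop :=
  ∀ (S : Type) (I : NIS Ag Const Var Atom S CS), ∀ r ∈ I.R, ∀ n : ℕ,
    (∀ ψ ∈ T, I.SatP ψ r n) → I.SatP φ r n

end JTO

namespace JTO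

namespace Prot

variable {Ag Const Var Atom : Type}

open Classical in
/-- Admissible deontic evidence: only the variable `vp` justifies the atom `pay`;
constants and `‡`-terms justify everything; products are closed under application. -/
noncomputable def D (pay : Atom) (vp : Var) : TmO Const Var → Set (Fm Ag Const Var Atom)
  | .const _ => Set.univ
  | .var x => if x = vp then {Fm.atom pay} else ∅
  | .ddag _ => Set.univ
  | .times t s => {ψ | ∃ φ, Fm.imp φ ψ ∈ D pay vp t ∧ φ ∈ D pay vp s}

/-- A concrete semantic valuation on the single run over ℕ. -/
noncomputable def sat (winp pay : Atom) (vp : Var) : Fm Ag Const Var Atom → ℕ → Prop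
  | .atom p, _ => p = winp ∨ p = pay
  | .bot, _ => False
  | .imp φ ψ, n => sat winp pay vp φ n → sat winp pay vp ψ n
  | .next φ, n => sat winp pay vp φ (n+1)
  | .wprev φ, n => n = 0 ∨ sat winp pay vp φ (n-1)
  | .untl φ ψ, n => ∃ m, n ≤ m ∧ sat winp pay vp ψ m ∧
      ∀ k, n ≤ k → k < m → sat winp pay vp φ k
  | .snce φ ψ, n => ∃ m, m ≤ n ∧ sat winp pay vp ψ m ∧
      ∀ k, m < k → k ≤ n → sat winp pay vp φ k
  | .jbox _ _ φ, _ => ∀ m, sat winp pay vp φ m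
  | .obox _ t φ, _ => φ ∈ D pay vp t ∧ ∀ m, sat winp pay vp φ m

variable (winp pay : Atom) (vp : Var)

lemma sat_atom (p : Atom) (n : ℕ) :
    sat winp pay vp (Fm.atom p : Fm Ag Const Var Atom) n ↔ (p = winp ∨ p = pay) := Iff.rfl

lemma sat_imp (φ ψ : Fm Ag Const Var Atom) (n : ℕ) :
    sat winp pay vp (Fm.imp φ ψ) n ↔ (sat winp pay vp φ n → sat winp pay vp ψ n) := Iff.rfl

lemma sat_bot (n : ℕ) : sat winp pay vp (Fm.bot : Fm Ag Const Var Atom) n ↔ False := Iff.rfl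

lemma sat_next (φ : Fm Ag Const Var Atom) (n : ℕ) :
    sat winp pay vp (Fm.next φ) n ↔ sat winp pay vp φ (n+1) := Iff.rfl

lemma sat_wprev (φ : Fm Ag Const Var Atom) (n : ℕ) :
    sat winp pay vp (Fm.wprev φ) n ↔ (n = 0 ∨ sat winp pay vp φ (n-1)) := Iff.rfl

lemma sat_untl (φ ψ : Fm Ag Const Var Atom) (n : ℕ) :
    sat winp pay vp (Fm.untl φ ψ) n ↔ ∃ m, n ≤ m ∧ sat winp pay vp ψ m ∧
      ∀ k, n ≤ k → k < m → sat winp pay vp φ k := Iff.rfl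

lemma sat_snce (φ ψ : Fm Ag Const Var Atom) (n : ℕ) :
    sat winp pay vp (Fm.snce φ ψ) n ↔ ∃ m, m ≤ n ∧ sat winp pay vp ψ m ∧
      ∀ k, m < k → k ≤ n → sat winp pay vp φ k := Iff.rfl

lemma sat_jbox (i : Ag) (t : TmE Const Var) (φ : Fm Ag Const Var Atom) (n : ℕ) :
    sat winp pay vp (Fm.jbox i t φ) n ↔ ∀ m, sat winp pay vp φ m := Iff.rfl

lemma sat_obox (i : Ag) (t : TmO Const Var) (φ : Fm Ag Const Var Atom) (n : ℕ) :
    sat winp pay vp (Fm.obox i t φ) n ↔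
      (φ ∈ D pay vp t ∧ ∀ m, sat winp pay vp φ m) := Iff.rfl

lemma sat_neg (φ : Fm Ag Const Var Atom) (n : ℕ) :
    sat winp pay vp (Fm.neg φ) n ↔ ¬ sat winp pay vp φ n := Iff.rfl

lemma sat_top (n : ℕ) : sat winp pay vp (Fm.top : Fm Ag Const Var Atom) n :=
  fun h => h

lemma sat_disj (φ ψ : Fm Ag Const Var Atom) (n : ℕ) :
    sat winp pay vp (Fm.disj φ ψ) n ↔ sat winp pay vp φ n ∨ sat winp pay vp ψ n := by
  rw [Fm.disj, sat_imp, sat_neg]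
  tauto

lemma sat_conj (φ ψ : Fm Ag Const Var Atom) (n : ℕ) :
    sat winp pay vp (Fm.conj φ ψ) n ↔ sat winp pay vp φ n ∧ sat winp pay vp ψ n := by
  rw [Fm.conj, sat_neg, sat_disj, sat_neg, sat_neg]
  tauto

lemma sat_biim (φ ψ : Fm Ag Const Var Atom) (n : ℕ) :
    sat winp pay vp (Fm.biim φ ψ) n ↔ (sat winp pay vp φ n ↔ sat winp pay vp ψ n) := by
  rw [Fm.biim, sat_conj, sat_imp, sat_imp]
  tauto

lemma sat_ev (ψ : Fm Ag Const Var Atom) (n : ℕ) :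
    sat winp pay vp (Fm.ev ψ) n ↔ ∃ m, n ≤ m ∧ sat winp pay vp ψ m := by
  rw [Fm.ev, sat_untl]
  constructor
  · rintro ⟨m, h1, h2, -⟩; exact ⟨m, h1, h2⟩
  · rintro ⟨m, h1, h2⟩; exact ⟨m, h1, h2, fun k _ _ => sat_top winp pay vp k⟩

lemma sat_alw (φ : Fm Ag Const Var Atom) (n : ℕ) :
    sat winp pay vp (Fm.alw φ) n ↔ ∀ m, n ≤ m → sat winp pay vp φ m := by
  rw [Fm.alw, sat_neg, sat_ev]
  constructor
  · intro h m hm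
    by_contra hφ
    exact h ⟨m, hm, (sat_neg winp pay vp φ m).2 hφ⟩
  · rintro h ⟨m, hm, hneg⟩
    exact (sat_neg winp pay vp φ m).1 hneg (h m hm)

lemma sat_once (ψ : Fm Ag Const Var Atom) (n : ℕ) :
    sat winp pay vp (Fm.once ψ) n ↔ ∃ m, m ≤ n ∧ sat winp pay vp ψ m := by
  rw [Fm.once, sat_snce]
  constructor
  · rintro ⟨m, h1, h2, -⟩; exact ⟨m, h1, h2⟩
  · rintro ⟨m, h1, h2⟩; exact ⟨m, h1, h2, fun k _ _ => sat_top winp pay vp k⟩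

lemma sat_sofar (φ : Fm Ag Const Var Atom) (n : ℕ) :
    sat winp pay vp (Fm.sofar φ) n ↔ ∀ m, m ≤ n → sat winp pay vp φ m := by
  rw [Fm.sofar, sat_neg, sat_once]
  constructor
  · intro h m hm
    by_contra hφ
    exact h ⟨m, hm, (sat_neg winp pay vp φ m).2 hφ⟩
  · rintro h ⟨m, hm, hneg⟩
    exact (sat_neg winp pay vp φ m).1 hneg (h m hm)

lemma sat_sprev (φ : Fm Ag Const Var Atom) (n : ℕ) :
    sat winp pay vp (Fm.sprev φ) n ↔ (n ≠ 0 ∧ sat winp pay vp φ (n-1)) := by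
  rw [Fm.sprev, sat_neg, sat_wprev, sat_neg]
  tauto

lemma sat_boxdot (φ : Fm Ag Const Var Atom) (n : ℕ) :
    sat winp pay vp (Fm.boxdot φ) n ↔ ∀ m, sat winp pay vp φ m := by
  rw [Fm.boxdot, sat_conj, sat_sofar, sat_alw]
  constructor
  · rintro ⟨hA, hB⟩ m
    rcases le_or_gt m n with h | h
    · exact hA m h
    · exact hB m h.le
  · intro h; exact ⟨fun m _ => h m, fun m _ => h m⟩

lemma sat_timeEq (k : ℕ) : ∀ n : ℕ,
    sat winp pay vp (Fm.timeEq k : Fm Ag Const Var Atom) n ↔ n = k := by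
  induction k with
  | zero =>
    intro n
    rw [Fm.timeEq, sat_wprev, sat_bot]
    simp
  | succ k ih =>
    intro n
    rw [Fm.timeEq, sat_sprev, ih]
    omega

lemma sat_of_axiom {φ : Fm Ag Const Var Atom} (h : IsAxiom φ) : ∀ n : ℕ,
    sat winp pay vp φ n := by
  induction h with
  | @taut φ h =>
    intro n
    classical
    by_contra hn
    have hv := h (fun ψ => decide (sat winp pay vp ψ n))
      (by simp [sat_bot])
      (by intro a b; simp only [sat_imp]; by_cases ha : sat winp pay vp a n <;>
          by_cases hb : sat winp pay vp b n <;> simp [ha, hb])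
    rw [decide_eq_true_iff] at hv
    exact hn hv
  | nextK φ ψ =>
    intro n
    rw [sat_imp, sat_imp, sat_next, sat_next, sat_next, sat_imp]
    exact fun h1 h2 => h1 h2
  | alwK φ ψ =>
    intro n
    rw [sat_imp, sat_imp, sat_alw, sat_alw, sat_alw]
    intro h1 h2 m hm
    exact (sat_imp winp pay vp φ ψ m).1 (h1 m hm) (h2 m hm)
  | fn φ =>
    intro n
    rw [sat_biim]
    exact Iff.rfl
  | ind φ =>
    intro n
    rw [sat_imp, sat_imp, sat_alw, sat_alw]
    intro h1 h2
    have key : ∀ m, n ≤ m → sat winp pay vp φ m := by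
      intro m
      induction m with
      | zero =>
        intro hm
        have : n = 0 := by omega
        rwa [this] at h2
      | succ m ihm =>
        intro hm
        rcases Nat.lt_or_ge n (m+1) with h | h
        · have hm' : n ≤ m := by omega
          have := (sat_imp winp pay vp φ (Fm.next φ) m).1 (h1 m hm') (ihm hm')
          rwa [sat_next] at this
        · have : n = m + 1 := by omega
          rwa [this] at h2
    exact key
  | untl1 φ ψ =>
    intro n
    rw [sat_imp, sat_untl, sat_ev]
    rintro ⟨m, h1, h2, -⟩
    exact ⟨m, h1, h2⟩
  | untl2 φ ψ =>
    intro n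
    rw [sat_biim, sat_untl, sat_disj, sat_conj, sat_next, sat_untl]
    constructor
    · rintro ⟨m, h1, h2, h3⟩
      rcases eq_or_lt_of_le h1 with rfl | hlt
      · left; exact h2
      · right
        exact ⟨h3 n le_rfl hlt, m, by omega, h2, fun k hk1 hk2 => h3 k (by omega) hk2⟩
    · rintro (hψ | ⟨hφ, m, h1, h2, h3⟩)
      · exact ⟨n, le_rfl, hψ,
          fun k hk1 hk2 => absurd (lt_of_le_of_lt hk1 hk2) (lt_irrefl n)⟩
      · refine ⟨m, by omega, h2, fun k hk1 hk2 => ?_⟩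
        rcases eq_or_lt_of_le hk1 with rfl | h
        · exact hφ
        · exact h3 k (by omega) hk2
  | sofarK φ ψ =>
    intro n
    rw [sat_imp, sat_imp, sat_sofar, sat_sofar, sat_sofar]
    intro h1 h2 m hm
    exact (sat_imp winp pay vp φ ψ m).1 (h1 m hm) (h2 m hm)
  | wprevK φ ψ =>
    intro n
    rw [sat_imp, sat_imp, sat_wprev, sat_wprev, sat_wprev]
    rintro (h1 | h1) (h2 | h2) <;> try (left; assumption)
    right; exact (sat_imp winp pay vp φ ψ (n-1)).1 h1 h2
  | sw φ =>
    intro n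
    rw [sat_imp, sat_sprev, sat_wprev]
    rintro ⟨-, h⟩
    right; exact h
  | initial =>
    intro n
    rw [sat_once]
    refine ⟨0, Nat.zero_le n, ?_⟩
    rw [sat_wprev]
    left; rfl
  | sofarInd φ =>
    intro n
    rw [sat_imp, sat_imp, sat_sofar, sat_sofar]
    intro h1 h2 m hm
    have key : ∀ j, sat winp pay vp φ (n - j) := by
      intro j
      induction j with
      | zero => simpa using h2
      | succ j ihj =>
        rcases Nat.lt_or_ge j n with h | h
        · have h0 := (sat_imp winp pay vp φ (Fm.wprev φ) (n-j)).1
            (h1 (n - j) (by omega)) ihj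
          rw [sat_wprev] at h0
          rcases h0 with h0 | h0
          · have hj : n - j = 0 := h0
            have : n - (j+1) = 0 := by omega
            rw [this, ← hj]
            exact ihj
          · have : n - j - 1 = n - (j+1) := by omega
            rwa [this] at h0
        · have : n - (j+1) = n - j := by omega
          rwa [this]
    have := key (n - m)
    have heq : n - (n - m) = m := by omega
    rwa [heq] at this
  | snce1 φ ψ =>
    intro n
    rw [sat_imp, sat_snce, sat_once]
    rintro ⟨m, h1, h2, -⟩
    exact ⟨m, h1, h2⟩
  | snce2 φ ψ =>
    intro n
    rw [sat_biim, sat_snce, sat_disj, sat_conj, sat_sprev, sat_snce]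
    constructor
    · rintro ⟨m, h1, h2, h3⟩
      rcases eq_or_lt_of_le h1 with rfl | hlt
      · left; exact h2
      · right
        exact ⟨h3 n hlt le_rfl, by omega,
          m, by omega, h2, fun k hk1 hk2 => h3 k hk1 (by omega)⟩
    · rintro (hψ | ⟨hφ, hn0, m, h1, h2, h3⟩)
      · exact ⟨n, le_rfl, hψ,
          fun k hk1 hk2 => absurd (lt_of_lt_of_le hk1 hk2) (lt_irrefl n)⟩
      · refine ⟨m, by omega, h2, fun k hk1 hk2 => ?_⟩
        rcases eq_or_lt_of_le hk2 with rfl | h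
        · exact hφ
        · exact h3 k hk1 (by omega)
  | fp φ =>
    intro n
    rw [sat_imp, sat_next, sat_sprev]
    intro h
    refine ⟨Nat.succ_ne_zero n, ?_⟩
    simpa using h
  | pf φ =>
    intro n
    rw [sat_imp, sat_wprev]
    intro h
    rcases Nat.eq_zero_or_pos n with h0 | h0
    · left; exact h0
    · right
      rw [sat_next]
      have : n - 1 + 1 = n := by omega
      rwa [this]
  | app i t s φ ψ =>
    intro n
    rw [sat_imp, sat_imp, sat_jbox, sat_jbox, sat_jbox]
    intro h1 h2 m
    exact (sat_imp winp pay vp φ ψ m).1 (h1 m) (h2 m)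
  | sum1 i t s φ =>
    intro n
    rw [sat_imp, sat_jbox, sat_jbox]
    exact fun h => h
  | sum2 i t s φ =>
    intro n
    rw [sat_imp, sat_jbox, sat_jbox]
    exact fun h => h
  | fact i t φ =>
    intro n
    rw [sat_imp, sat_jbox]
    exact fun h => h n
  | pos i t φ =>
    intro n
    rw [sat_imp, sat_jbox, sat_jbox]
    intro h m
    rw [sat_jbox]
    exact h
  | appO i t s φ ψ =>
    intro n
    rw [sat_imp, sat_imp, sat_obox, sat_obox, sat_obox]
    rintro ⟨hd1, h1⟩ ⟨hd2, h2⟩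
    exact ⟨⟨φ, hd1, hd2⟩, fun m => (sat_imp winp pay vp φ ψ m).1 (h1 m) (h2 m)⟩
  | noc i t φ =>
    intro n
    rw [sat_imp, Fm.pbox, sat_neg, sat_obox, sat_obox]
    rintro ⟨-, h1⟩ ⟨-, h2⟩
    exact (sat_neg winp pay vp φ 0).1 (h2 0) (h1 0)
  | ofact i t φ =>
    intro n
    rw [sat_obox]
    refine ⟨by simp [D], fun m => ?_⟩
    rw [sat_imp, sat_obox]
    rintro ⟨-, h⟩
    exact h m

lemma sat_of_eiter {φ : Fm Ag Const Var Atom} (h : EIter φ) : ∀ n : ℕ,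
    sat winp pay vp φ n := by
  induction h with
  | base h =>
    intro n
    rw [sat_jbox]
    exact fun m => sat_of_axiom winp pay vp h m
  | step h ih =>
    intro n
    rw [sat_jbox]
    exact fun m => ih m

lemma sat_of_oiter {φ : Fm Ag Const Var Atom} (h : OIter φ) : ∀ n : ℕ,
    sat winp pay vp φ n := by
  induction h with
  | base h =>
    intro n
    rw [sat_obox]
    exact ⟨by simp [D], fun m => sat_of_axiom winp pay vp h m⟩
  | step h ih =>
    intro n
    rw [sat_obox]
    exact ⟨by simp [D], fun m => ih m⟩

lemma sat_of_deriv {CS : ConstSpec Ag Const Var Atom} {φ : Fm Ag Const Var Atom}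
    (h : Deriv CS φ) : ∀ n : ℕ, sat winp pay vp φ n := by
  induction h with
  | ax h => exact sat_of_axiom winp pay vp h
  | @mp φ ψ h1 h2 ih1 ih2 =>
    intro n
    exact (sat_imp winp pay vp φ ψ n).1 (ih1 n) (ih2 n)
  | necNext h ih =>
    intro n
    rw [sat_next]
    exact ih (n+1)
  | necWPrev h ih =>
    intro n
    rw [sat_wprev]
    rcases Nat.eq_zero_or_pos n with h0 | h0
    · left; exact h0
    · right; exact ih (n-1)
  | necAlw h ih =>
    intro n
    exact (sat_alw winp pay vp _ n).2 (fun m _ => ih m)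
  | necSofar h ih =>
    intro n
    exact (sat_sofar winp pay vp _ n).2 (fun m _ => ih m)
  | @csax φ hmem =>
    intro n
    rcases CS.shape φ hmem with h | h
    · exact sat_of_eiter winp pay vp h n
    · exact sat_of_oiter winp pay vp h n

lemma sat_conjList {L : List (Fm Ag Const Var Atom)} {n : ℕ}
    (h : ∀ ψ ∈ L, sat winp pay vp ψ n) : sat winp pay vp (conjList L) n := by
  induction L with
  | nil => exact sat_top winp pay vp n
  | cons φ L ih =>
    rw [conjList, sat_conj]
    exact ⟨h φ (by simp), ih (fun ψ hψ => h ψ (by simp [hψ]))⟩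

end Prot

/-- the set of assumptions {contract, court, time=10} of the
Protagoras paradox is consistent in JTO_CS. -/
theorem protagoras_assumptions_consistent (Ag Const Var Atom : Type)
    (CS : ConstSpec Ag Const Var Atom) (e : Ag)
    (winp winfirst pay : Atom)
    (h1 : winp ≠ winfirst) (h2 : winp ≠ pay) (h3 : winfirst ≠ pay)
    (a vp ve : Var) (h4 : a ≠ vp) (h5 : a ≠ ve) (h6 : vp ≠ ve) :
    Consistent CS
      ({ Fm.boxdot (Fm.biim (Fm.atom winfirst) (Fm.obox e (TmO.var a) (Fm.atom pay))),
         Fm.trueAt 10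
           (Fm.conj (Fm.biim (Fm.neg (Fm.atom winp)) (Fm.atom winfirst))
             (Fm.conj ((Fm.atom winp).imp (Fm.obox e (TmO.var vp) (Fm.atom pay)))
               ((Fm.neg (Fm.atom winp)).imp
                 (Fm.neg (Fm.obox e (TmO.var ve) (Fm.atom pay)))))),
         Fm.timeEq 10 } : Set (Fm Ag Const Var Atom)) := by
  rintro ⟨L, hL, hd⟩
  have hsat := Prot.sat_of_deriv winp pay vp hd 10
  rw [Prot.sat_imp, Prot.sat_bot] at hsat
  apply hsat
  apply Prot.sat_conjList
  intro ψ hψ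
  have hwfirst : ∀ m, ¬ Prot.sat winp pay vp (Fm.atom winfirst : Fm Ag Const Var Atom) m := by
    intro m h
    rw [Prot.sat_atom] at h
    rcases h with h | h
    · exact h1 h.symm
    · exact h3 h
  have hpay : ∀ m, Prot.sat winp pay vp (Fm.atom pay : Fm Ag Const Var Atom) m := by
    intro m; rw [Prot.sat_atom]; right; rfl
  have hwinp : ∀ m, Prot.sat winp pay vp (Fm.atom winp : Fm Ag Const Var Atom) m := by
    intro m; rw [Prot.sat_atom]; left; rfl
  rcases hL ψ hψ with rfl | rfl | rfl
  · -- contract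
    rw [Prot.sat_boxdot]
    intro m
    rw [Prot.sat_biim]
    constructor
    · intro h; exact absurd h (hwfirst m)
    · intro h
      rw [Prot.sat_obox] at h
      exfalso
      have hD := h.1
      simp only [Prot.D, if_neg h4] at hD
      exact hD
  · -- court
    rw [Fm.trueAt, Prot.sat_boxdot]
    intro m
    rw [Prot.sat_imp]
    intro htime
    rw [Prot.sat_conj, Prot.sat_biim, Prot.sat_conj]
    refine ⟨?_, ?_, ?_⟩
    · rw [Prot.sat_neg]
      constructor
      · intro h; exact absurd (hwinp m) h
      · intro h; exact absurd h (hwfirst m)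
    · rw [Prot.sat_imp, Prot.sat_obox]
      intro _
      exact ⟨by simp [Prot.D], fun k => hpay k⟩
    · rw [Prot.sat_imp, Prot.sat_neg, Prot.sat_neg]
      intro h; exact absurd (hwinp m) h
  · -- time = 10
    rw [Prot.sat_timeEq]

end JTO
end

section
/- (Judge's verdict in the first case) For every constant specification CS: {contract, court, NoWinFirst', PastLooking} ⊢_CS true_10(¬win_p ∧ winfirst_e ∧ O[a]_e pay), where contract := ⊡(winfirst_e ↔ O[a]_e pay), court := true_10((¬win_p ↔ winfirst_e) ∧ (win_p → O[vp]_e pay) ∧ (¬win_p → ¬O[ve]_e pay)), NoWinFirst' := true_10(□⁻ ⊙_w ¬winfirst_e), PastLooking := true_10(□⁻ ⊙_w ¬winfirst_e → ¬win_p), for pairwise distinct atomic propositions win_p, winfirst_e, pay, an agent e, and pairwise distinct justification variables a, vp, ve. -/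
namespace JTO

section AuxLemmas

variable {Ag Const Var Atom : Type} {CS : ConstSpec Ag Const Var Atom}

private lemma tderiv {φ : Fm Ag Const Var Atom} (h : Taut φ) : Deriv CS φ :=
  Deriv.ax (IsAxiom.taut h)

private lemma impTrans {p q r : Fm Ag Const Var Atom}
    (hpq : Deriv CS (p.imp q)) (hqr : Deriv CS (q.imp r)) : Deriv CS (p.imp r) := by
  have t : Taut ((p.imp q).imp ((q.imp r).imp (p.imp r))) := by
    intro v hb hi
    simp only [hi]
    cases v p <;> cases v q <;> cases v r <;> simp
  exact Deriv.mp (Deriv.mp (tderiv t) hpq) hqr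

private lemma impTrans2 {p q r s : Fm Ag Const Var Atom}
    (hpq : Deriv CS (p.imp (q.imp r))) (hrs : Deriv CS (r.imp s)) :
    Deriv CS (p.imp (q.imp s)) := by
  have t : Taut ((p.imp (q.imp r)).imp ((r.imp s).imp (p.imp (q.imp s)))) := by
    intro v hb hi
    simp only [hi]
    cases v p <;> cases v q <;> cases v r <;> cases v s <;> simp
  exact Deriv.mp (Deriv.mp (tderiv t) hpq) hrs

private lemma impTrans3 {p q r s u : Fm Ag Const Var Atom}
    (hpq : Deriv CS (p.imp (q.imp (r.imp s)))) (hsu : Deriv CS (s.imp u)) :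
    Deriv CS (p.imp (q.imp (r.imp u))) := by
  have t : Taut ((p.imp (q.imp (r.imp s))).imp ((s.imp u).imp (p.imp (q.imp (r.imp u))))) := by
    intro v hb hi
    simp only [hi]
    cases v p <;> cases v q <;> cases v r <;> cases v s <;> cases v u <;> simp
  exact Deriv.mp (Deriv.mp (tderiv t) hpq) hsu

private lemma andL {p q : Fm Ag Const Var Atom} : Deriv CS ((Fm.conj p q).imp p) := by
  apply tderiv
  intro v hb hi
  simp only [Fm.conj, Fm.disj, Fm.neg, hi, hb]
  cases v p <;> cases v q <;> simp

private lemma andR {p q : Fm Ag Const Var Atom} : Deriv CS ((Fm.conj p q).imp q) := by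
  apply tderiv
  intro v hb hi
  simp only [Fm.conj, Fm.disj, Fm.neg, hi, hb]
  cases v p <;> cases v q <;> simp

private lemma pairImp {p x y : Fm Ag Const Var Atom}
    (hx : Deriv CS (p.imp x)) (hy : Deriv CS (p.imp y)) :
    Deriv CS (p.imp (Fm.conj x y)) := by
  have t : Taut ((p.imp x).imp ((p.imp y).imp (p.imp (Fm.conj x y)))) := by
    intro v hb hi
    simp only [Fm.conj, Fm.disj, Fm.neg, hi, hb]
    cases v p <;> cases v x <;> cases v y <;> simp
  exact Deriv.mp (Deriv.mp (tderiv t) hx) hy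

private lemma collect4 {p a1 a2 a3 a4 r : Fm Ag Const Var Atom}
    (h1 : Deriv CS (p.imp a1)) (h2 : Deriv CS (p.imp a2))
    (h3 : Deriv CS (p.imp a3)) (h4 : Deriv CS (p.imp a4))
    (h : Deriv CS (a1.imp (a2.imp (a3.imp (a4.imp r))))) :
    Deriv CS (p.imp r) := by
  have t : Taut ((a1.imp (a2.imp (a3.imp (a4.imp r)))).imp
      ((p.imp a1).imp ((p.imp a2).imp ((p.imp a3).imp ((p.imp a4).imp (p.imp r)))))) := by
    intro v hb hi
    simp only [hi]
    cases v p <;> cases v a1 <;> cases v a2 <;> cases v a3 <;> cases v a4 <;> cases v r <;> simp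
  exact Deriv.mp (Deriv.mp (Deriv.mp (Deriv.mp (Deriv.mp (tderiv t) h) h1) h2) h3) h4

private lemma sofarChain {x1 x2 x3 x4 x5 : Fm Ag Const Var Atom}
    (h : Deriv CS (x1.imp (x2.imp (x3.imp (x4.imp x5))))) :
    Deriv CS ((Fm.sofar x1).imp ((Fm.sofar x2).imp ((Fm.sofar x3).imp
      ((Fm.sofar x4).imp (Fm.sofar x5))))) := by
  have d1 : Deriv CS ((Fm.sofar x1).imp (Fm.sofar (x2.imp (x3.imp (x4.imp x5))))) :=
    Deriv.mp (Deriv.ax (IsAxiom.sofarK _ _)) (Deriv.necSofar h)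
  have d2 := impTrans d1 (Deriv.ax (IsAxiom.sofarK x2 (x3.imp (x4.imp x5))))
  have d3 := impTrans2 d2 (Deriv.ax (IsAxiom.sofarK x3 (x4.imp x5)))
  exact impTrans3 d3 (Deriv.ax (IsAxiom.sofarK x4 x5))

private lemma alwChain {x1 x2 x3 x4 x5 : Fm Ag Const Var Atom}
    (h : Deriv CS (x1.imp (x2.imp (x3.imp (x4.imp x5))))) :
    Deriv CS ((Fm.alw x1).imp ((Fm.alw x2).imp ((Fm.alw x3).imp
      ((Fm.alw x4).imp (Fm.alw x5))))) := by
  have d1 : Deriv CS ((Fm.alw x1).imp (Fm.alw (x2.imp (x3.imp (x4.imp x5))))) :=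
    Deriv.mp (Deriv.ax (IsAxiom.alwK _ _)) (Deriv.necAlw h)
  have d2 := impTrans d1 (Deriv.ax (IsAxiom.alwK x2 (x3.imp (x4.imp x5))))
  have d3 := impTrans2 d2 (Deriv.ax (IsAxiom.alwK x3 (x4.imp x5)))
  exact impTrans3 d3 (Deriv.ax (IsAxiom.alwK x4 x5))

private lemma proj1 {x1 x2 x3 x4 : Fm Ag Const Var Atom} :
    Deriv CS ((conjList [x1, x2, x3, x4]).imp x1) := andL

private lemma proj2 {x1 x2 x3 x4 : Fm Ag Const Var Atom} :
    Deriv CS ((conjList [x1, x2, x3, x4]).imp x2) := impTrans andR andL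

private lemma proj3 {x1 x2 x3 x4 : Fm Ag Const Var Atom} :
    Deriv CS ((conjList [x1, x2, x3, x4]).imp x3) :=
  impTrans andR (impTrans andR andL)

private lemma proj4 {x1 x2 x3 x4 : Fm Ag Const Var Atom} :
    Deriv CS ((conjList [x1, x2, x3, x4]).imp x4) :=
  impTrans andR (impTrans andR (impTrans andR andL))

end AuxLemmas

/-- Judge's verdict in the first case: from contract, court,
NoWinFirst' and PastLooking one derives true_10(¬win_p ∧ winfirst_e ∧ O[a]_e pay). -/
theorem judges_verdict_first_case (Ag Const Var Atom : Type)
    (CS : ConstSpec Ag Const Var Atom) (e : Ag)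
    (winp winfirst pay : Atom)
    (h1 : winp ≠ winfirst) (h2 : winp ≠ pay) (h3 : winfirst ≠ pay)
    (a vp ve : Var) (h4 : a ≠ vp) (h5 : a ≠ ve) (h6 : vp ≠ ve) :
    DerivFrom CS
      ({ Fm.boxdot (Fm.biim (Fm.atom winfirst) (Fm.obox e (TmO.var a) (Fm.atom pay))),
         Fm.trueAt 10
           (Fm.conj (Fm.biim (Fm.neg (Fm.atom winp)) (Fm.atom winfirst))
             (Fm.conj ((Fm.atom winp).imp (Fm.obox e (TmO.var vp) (Fm.atom pay)))
               ((Fm.neg (Fm.atom winp)).imp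
                 (Fm.neg (Fm.obox e (TmO.var ve) (Fm.atom pay)))))),
         Fm.trueAt 10 (Fm.sofar (Fm.wprev (Fm.neg (Fm.atom winfirst)))),
         Fm.trueAt 10 ((Fm.sofar (Fm.wprev (Fm.neg (Fm.atom winfirst)))).imp
           (Fm.neg (Fm.atom winp))) } : Set (Fm Ag Const Var Atom))
      (Fm.trueAt 10
        (Fm.conj (Fm.neg (Fm.atom winp))
          (Fm.conj (Fm.atom winfirst) (Fm.obox e (TmO.var a) (Fm.atom pay))))) := by
  set Pa : Fm Ag Const Var Atom := Fm.obox e (TmO.var a) (Fm.atom pay) with hPa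
  set Pv : Fm Ag Const Var Atom := Fm.obox e (TmO.var vp) (Fm.atom pay) with hPv
  set Pe : Fm Ag Const Var Atom := Fm.obox e (TmO.var ve) (Fm.atom pay) with hPe
  set A : Fm Ag Const Var Atom := Fm.biim (Fm.atom winfirst) Pa with hA
  set B : Fm Ag Const Var Atom :=
    Fm.conj (Fm.biim (Fm.neg (Fm.atom winp)) (Fm.atom winfirst))
      (Fm.conj ((Fm.atom winp).imp Pv) ((Fm.neg (Fm.atom winp)).imp (Fm.neg Pe))) with hB
  set C : Fm Ag Const Var Atom := Fm.sofar (Fm.wprev (Fm.neg (Fm.atom winfirst))) with hC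
  set D : Fm Ag Const Var Atom := C.imp (Fm.neg (Fm.atom winp)) with hD
  set G : Fm Ag Const Var Atom :=
    Fm.conj (Fm.neg (Fm.atom winp)) (Fm.conj (Fm.atom winfirst) Pa) with hG
  set t10 : Fm Ag Const Var Atom := Fm.timeEq 10 with ht10
  refine ⟨[Fm.boxdot A, Fm.trueAt 10 B, Fm.trueAt 10 C, Fm.trueAt 10 D], ?_, ?_⟩
  · intro ψ hψ
    simp only [List.mem_cons, List.not_mem_nil, or_false] at hψ
    rcases hψ with rfl | rfl | rfl | rfl <;> simp
  · have hT : Deriv CS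
        (A.imp ((t10.imp B).imp ((t10.imp C).imp ((t10.imp D).imp (t10.imp G))))) := by
      apply tderiv
      intro v hb hi
      simp only [hA, hB, hD, hG, Fm.biim, Fm.conj, Fm.disj, Fm.neg, hi, hb]
      cases v (Fm.atom winp) <;> cases v (Fm.atom winfirst) <;> cases v Pa <;>
        cases v Pv <;> cases v Pe <;> cases v C <;> cases v t10 <;> simp
    have hS := sofarChain (CS := CS) hT
    have hL := alwChain (CS := CS) hT
    have s1 : Deriv CS ((conjList [Fm.boxdot A, Fm.trueAt 10 B, Fm.trueAt 10 C,
        Fm.trueAt 10 D]).imp (Fm.sofar A)) := impTrans proj1 andL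
    have s2 : Deriv CS ((conjList [Fm.boxdot A, Fm.trueAt 10 B, Fm.trueAt 10 C,
        Fm.trueAt 10 D]).imp (Fm.sofar (t10.imp B))) := impTrans proj2 andL
    have s3 : Deriv CS ((conjList [Fm.boxdot A, Fm.trueAt 10 B, Fm.trueAt 10 C,
        Fm.trueAt 10 D]).imp (Fm.sofar (t10.imp C))) := impTrans proj3 andL
    have s4 : Deriv CS ((conjList [Fm.boxdot A, Fm.trueAt 10 B, Fm.trueAt 10 C,
        Fm.trueAt 10 D]).imp (Fm.sofar (t10.imp D))) := impTrans proj4 andL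
    have l1 : Deriv CS ((conjList [Fm.boxdot A, Fm.trueAt 10 B, Fm.trueAt 10 C,
        Fm.trueAt 10 D]).imp (Fm.alw A)) := impTrans proj1 andR
    have l2 : Deriv CS ((conjList [Fm.boxdot A, Fm.trueAt 10 B, Fm.trueAt 10 C,
        Fm.trueAt 10 D]).imp (Fm.alw (t10.imp B))) := impTrans proj2 andR
    have l3 : Deriv CS ((conjList [Fm.boxdot A, Fm.trueAt 10 B, Fm.trueAt 10 C,
        Fm.trueAt 10 D]).imp (Fm.alw (t10.imp C))) := impTrans proj3 andR
    have l4 : Deriv CS ((conjList [Fm.boxdot A, Fm.trueAt 10 B, Fm.trueAt 10 C,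
        Fm.trueAt 10 D]).imp (Fm.alw (t10.imp D))) := impTrans proj4 andR
    have qS := collect4 s1 s2 s3 s4 hS
    have qL := collect4 l1 l2 l3 l4 hL
    exact pairImp qS qL


end JTO
end
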